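/- Selection procedure for directional rectangles: given a finite family of rectangles R_1, …, R_ℓ in ℝ² ordered so that their long side lengths L_j are non-increasing, there exist indices β_1 = 1 < β_2 < ⋯ < β_m such that (a) Σ_{k=1}^{j−1} |R_{β_k} ∩ R_{β_j}| ≤ (1/2)|R_{β_j}| for each j = 2, …, m, and (b) for every non-selected index α there exists j with β_j < α such that Σ_{k=1}^{j} |R_{β_k} ∩ R_α| > (1/2)|R_α| and L_{β_k} ≥ L_α for all k ≤ j. -/
import Mathlib


open MeasureTheory Set Real
open scoped ENNReal

noncomputable section

/-- A cube (square) in the plane with sides parallel to the axes. -/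
def IsCube2 (Q : Set (ℝ × ℝ)) : Prop :=
  ∃ a b r : ℝ, 0 < r ∧ Q = Ioo a (a + r) ×ˢ Ioo b (b + r)

/-- The Hardy–Littlewood maximal operator over cubes in the plane. -/
def MHL2 (f : ℝ × ℝ → ℝ) (x : ℝ × ℝ) : ℝ≥0∞ :=
  ⨆ (Q : Set (ℝ × ℝ)) (_ : IsCube2 Q ∧ x ∈ Q),
    (∫⁻ y in Q, ENNReal.ofReal |f y|) / volume Q

/-- The open rectangle with center `c`, long direction `v`, short side `l` and
long side `L`. -/
def dirRect (v c : ℝ × ℝ) (l L : ℝ) : Set (ℝ × ℝ) :=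
  {x | |(x.1 - c.1) * v.1 + (x.2 - c.2) * v.2| < L / 2 ∧
       |(x.2 - c.2) * v.1 - (x.1 - c.1) * v.2| < l / 2}

/-- The set of `N` uniformly spread unit vectors on the circle. -/
def SigmaN (N : ℕ) : Set (ℝ × ℝ) :=
  {v | ∃ j < N, v = (Real.cos (2 * π * j / N), Real.sin (2 * π * j / N))}

/-- Rectangles whose longest side is parallel to a direction in `Σ_N`. -/
def IsDirRect (N : ℕ) (R : Set (ℝ × ℝ)) : Prop :=
  ∃ v ∈ SigmaN N, ∃ c : ℝ × ℝ, ∃ l L : ℝ, 0 < l ∧ l ≤ L ∧ R = dirRect v c l L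

/-- The directional maximal operator associated with `Σ_N`. -/
def MSig (N : ℕ) (f : ℝ × ℝ → ℝ) (x : ℝ × ℝ) : ℝ≥0∞ :=
  ⨆ (R : Set (ℝ × ℝ)) (_ : IsDirRect N R ∧ x ∈ R),
    (∫⁻ y in R, ENNReal.ofReal |f y|) / volume R

/-- The directional maximal operator acting on `ℝ≥0∞`-valued functions. -/
def MSigE (N : ℕ) (g : ℝ × ℝ → ℝ≥0∞) (x : ℝ × ℝ) : ℝ≥0∞ :=
  ⨆ (R : Set (ℝ × ℝ)) (_ : IsDirRect N R ∧ x ∈ R),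
    (∫⁻ y in R, g y) / volume R

open Classical in
noncomputable def selSet (w : ℕ → ℕ → ℝ≥0∞) (v : ℕ → ℝ≥0∞) : ℕ → Finset ℕ
  | 0 => ∅
  | n + 1 => selSet w v n ∪
      (if (∑ k ∈ selSet w v n, w k n) ≤ 2⁻¹ * v n then {n} else ∅)

lemma selSet_subset_range (w : ℕ → ℕ → ℝ≥0∞) (v : ℕ → ℝ≥0∞) :
    ∀ n, selSet w v n ⊆ Finset.range n := by
  intro n
  induction n with
  | zero => simp [selSet]
  | succ n ih =>
    rw [selSet]
    apply Finset.union_subset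
    · exact ih.trans (Finset.range_subset_range.mpr (Nat.le_succ n))
    · split
      · simp
      · simp

lemma mem_selSet_iff (w : ℕ → ℕ → ℝ≥0∞) (v : ℕ → ℝ≥0∞) (n k : ℕ) :
    k ∈ selSet w v n ↔ k < n ∧ (∑ j ∈ selSet w v k, w j k) ≤ 2⁻¹ * v k := by
  induction n with
  | zero => simp [selSet]
  | succ n ih =>
    rw [selSet, Finset.mem_union]
    constructor
    · rintro (h | h)
      · exact ⟨(ih.mp h).1.trans (Nat.lt_succ_self n), (ih.mp h).2⟩
      · rcases Classical.em ((∑ j ∈ selSet w v n, w j n) ≤ 2⁻¹ * v n) with hc | hc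
        · rw [if_pos hc, Finset.mem_singleton] at h
          subst h
          exact ⟨Nat.lt_succ_self k, hc⟩
        · rw [if_neg hc] at h; simp at h
    · rintro ⟨hkn, hc⟩
      rcases Nat.lt_succ_iff_lt_or_eq.mp hkn with h | rfl
      · exact Or.inl (ih.mpr ⟨h, hc⟩)
      · right; rw [if_pos hc]; simp

lemma selSet_eq_filter (w : ℕ → ℕ → ℝ≥0∞) (v : ℕ → ℝ≥0∞) {a n : ℕ} (h : a ≤ n) :
    selSet w v a = (selSet w v n).filter (· < a) := by
  classical
  ext k
  simp only [Finset.mem_filter, mem_selSet_iff]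
  constructor
  · rintro ⟨hk, hc⟩; exact ⟨⟨hk.trans_le h, hc⟩, hk⟩
  · rintro ⟨⟨_, hc⟩, hk⟩; exact ⟨hk, hc⟩

/-- Selection procedure for (possibly tilted) rectangles with non-increasing
long side lengths. -/
theorem directional_selection (ℓ : ℕ) (hℓ : 1 ≤ ℓ)
    (θ : Fin ℓ → ℝ) (c : Fin ℓ → ℝ × ℝ) (l L : Fin ℓ → ℝ)
    (hl : ∀ j, 0 < l j) (hlL : ∀ j, l j ≤ L j)
    (R : Fin ℓ → Set (ℝ × ℝ))
    (hR : ∀ j, R j = dirRect (Real.cos (θ j), Real.sin (θ j)) (c j) (l j) (L j))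
    (hmono : ∀ i j : Fin ℓ, i ≤ j → L j ≤ L i) :
    ∃ (m : ℕ) (_ : 1 ≤ m) (β : Fin m → Fin ℓ), StrictMono β ∧
      (∀ h0 : 0 < m, β ⟨0, h0⟩ = ⟨0, hℓ⟩) ∧
      (∀ j : Fin m,
        ∑ k ∈ Finset.univ.filter fun k : Fin m => (k : ℕ) < (j : ℕ),
            volume (R (β k) ∩ R (β j)) ≤ 2⁻¹ * volume (R (β j))) ∧
      (∀ α : Fin ℓ, (∀ j : Fin m, β j ≠ α) →
        ∃ j : Fin m,
          (∀ k : Fin m, k ≤ j → ((β k : ℕ) < (α : ℕ) ∧ L α ≤ L (β k))) ∧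
          2⁻¹ * volume (R α) <
            ∑ k ∈ Finset.univ.filter fun k : Fin m => k ≤ j,
              volume (R (β k) ∩ R α)) := by
  classical
  set RR : ℕ → Set (ℝ × ℝ) := fun n => if h : n < ℓ then R ⟨n, h⟩ else ∅ with hRR
  set w : ℕ → ℕ → ℝ≥0∞ := fun k n => volume (RR k ∩ RR n) with hw
  set v : ℕ → ℝ≥0∞ := fun n => volume (RR n) with hv
  set S : Finset ℕ := selSet w v ℓ with hS
  have hSsub : ∀ k ∈ S, k < ℓ := fun k hk =>
    Finset.mem_range.mp (selSet_subset_range w v ℓ hk)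
  have h0S : 0 ∈ S := by
    rw [hS, mem_selSet_iff]
    exact ⟨hℓ, by simp [selSet]⟩
  set m : ℕ := S.card with hm
  have hm1 : 1 ≤ m := Finset.card_pos.mpr ⟨0, h0S⟩
  set βe : Fin m ↪o ℕ := S.orderEmbOfFin rfl with hβe
  have hβemem : ∀ j : Fin m, βe j ∈ S := fun j => Finset.orderEmbOfFin_mem S rfl j
  set β : Fin m → Fin ℓ := fun j => ⟨βe j, hSsub _ (hβemem j)⟩ with hβ
  have hβval : ∀ j : Fin m, (β j : ℕ) = βe j := fun j => rfl
  have hβsm : StrictMono β := fun i j hij => by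
    show (βe i : ℕ) < βe j
    exact βe.strictMono hij
  -- image of β (as naturals) is S
  have himg : Finset.image (fun k : Fin m => ((β k : Fin ℓ) : ℕ)) Finset.univ = S := by
    apply Finset.eq_of_subset_of_card_le
    · intro n hn
      rcases Finset.mem_image.mp hn with ⟨k, _, rfl⟩
      exact hβemem k
    · rw [Finset.card_image_of_injective _ (fun a b hab => βe.injective hab)]
      simp [hm]
  -- sum transfer lemma
  have key : ∀ (t : ℕ) (f : ℕ → ℝ≥0∞),
      ∑ k ∈ Finset.univ.filter (fun k : Fin m => ((β k : Fin ℓ) : ℕ) < t),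
          f ((β k : Fin ℓ) : ℕ)
        = ∑ n ∈ S.filter (· < t), f n := by
    intro t f
    rw [← himg, Finset.filter_image,
      Finset.sum_image (fun a _ b _ hab => βe.injective hab)]
  have hRRe : ∀ j : Fin ℓ, RR (j : ℕ) = R j := by
    intro j
    simp only [hRR, dif_pos j.isLt, Fin.eta]
  refine ⟨m, hm1, β, hβsm, ?_, ?_, ?_⟩
  · -- β 0 = 0
    intro h0
    have hβ0 : βe ⟨0, h0⟩ = S.min' ⟨0, h0S⟩ := Finset.orderEmbOfFin_zero rfl h0
    have : βe ⟨0, h0⟩ = 0 :=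
      le_antisymm (hβ0 ▸ S.min'_le 0 h0S) (Nat.zero_le _)
    exact Fin.ext this
  · -- condition (a)
    intro j
    have hmem := (mem_selSet_iff w v ℓ (βe j)).mp (hβemem j)
    have hfil : selSet w v (βe j) = S.filter (· < βe j) :=
      selSet_eq_filter w v (le_of_lt hmem.1)
    have hsum : ∑ k ∈ Finset.univ.filter (fun k : Fin m => (k : ℕ) < (j : ℕ)),
        volume (R (β k) ∩ R (β j))
        = ∑ n ∈ selSet w v (βe j), w n (βe j) := by
      rw [hfil]
      rw [← key (βe j) (fun n => volume (RR n ∩ RR (βe j)))]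
      apply Finset.sum_congr
      · apply Finset.filter_congr
        intro k _
        show (k : ℕ) < (j : ℕ) ↔ (βe k : ℕ) < βe j
        exact (βe.lt_iff_lt (a := k) (b := j)).symm
      · intro k _
        show volume (R (β k) ∩ R (β j)) = volume (RR ((β k : Fin ℓ) : ℕ) ∩ RR ((β j : Fin ℓ) : ℕ))
        rw [hRRe (β k), hRRe (β j)]
    rw [hsum]
    have : v (βe j) = volume (R (β j)) := by
      show volume (RR ((β j : Fin ℓ) : ℕ)) = _
      rw [hRRe (β j)]
    calc ∑ n ∈ selSet w v (βe j), w n (βe j) ≤ 2⁻¹ * v (βe j) := hmem.2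
      _ = 2⁻¹ * volume (R (β j)) := by rw [this]
  · -- condition (b)
    intro α hα
    have hαS : (α : ℕ) ∉ S := by
      intro hmem
      have : ∃ k : Fin m, ((β k : Fin ℓ) : ℕ) = (α : ℕ) := by
        rw [← himg] at hmem
        rcases Finset.mem_image.mp hmem with ⟨k, _, hk⟩
        exact ⟨k, hk⟩
      rcases this with ⟨k, hk⟩
      exact hα k (Fin.ext hk)
    have hαnot : ¬ ((∑ j ∈ selSet w v (α : ℕ), w j (α : ℕ)) ≤ 2⁻¹ * v (α : ℕ)) := by
      intro hcon
      exact hαS ((mem_selSet_iff w v ℓ (α : ℕ)).mpr ⟨α.isLt, hcon⟩)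
    have hbig : 2⁻¹ * v (α : ℕ) < ∑ j ∈ selSet w v (α : ℕ), w j (α : ℕ) :=
      lt_of_not_ge hαnot
    -- α ≠ 0
    have hαpos : 0 < (α : ℕ) := by
      rcases Nat.eq_zero_or_pos (α : ℕ) with h | h
      · exact absurd (h ▸ h0S) hαS
      · exact h
    -- the index j0 with βe j0 = 0
    have h0img : ∃ j0 : Fin m, ((β j0 : Fin ℓ) : ℕ) = 0 := by
      rw [← himg] at h0S
      rcases Finset.mem_image.mp h0S with ⟨j0, _, hj0⟩
      exact ⟨j0, hj0⟩
    rcases h0img with ⟨j0, hj0⟩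
    set T : Finset (Fin m) :=
      Finset.univ.filter (fun k : Fin m => ((β k : Fin ℓ) : ℕ) < (α : ℕ)) with hT
    have hTne : T.Nonempty :=
      ⟨j0, Finset.mem_filter.mpr ⟨Finset.mem_univ _, by rw [hj0]; exact hαpos⟩⟩
    set j : Fin m := T.max' hTne with hj
    have hjT : j ∈ T := T.max'_mem hTne
    have hjlt : ((β j : Fin ℓ) : ℕ) < (α : ℕ) := by
      simpa [hT] using Finset.mem_filter.mp hjT |>.2
    have hkT : ∀ k : Fin m, k ≤ j → ((β k : Fin ℓ) : ℕ) < (α : ℕ) := by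
      intro k hk
      calc ((β k : Fin ℓ) : ℕ) ≤ ((β j : Fin ℓ) : ℕ) := βe.monotone hk
        _ < (α : ℕ) := hjlt
    have hTfix : Finset.univ.filter (fun k : Fin m => k ≤ j) = T := by
      ext k
      simp only [Finset.mem_filter, Finset.mem_univ, true_and, hT]
      exact ⟨fun h => hkT k h,
        fun h => T.le_max' k (Finset.mem_filter.mpr ⟨Finset.mem_univ _, h⟩)⟩
    refine ⟨j, ?_, ?_⟩
    · intro k hk
      refine ⟨hkT k hk, ?_⟩
      exact hmono (β k) α (le_of_lt (hkT k hk))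
    · have hfil : selSet w v (α : ℕ) = S.filter (· < (α : ℕ)) :=
        selSet_eq_filter w v (le_of_lt α.isLt)
      have hsum : ∑ k ∈ Finset.univ.filter (fun k : Fin m => k ≤ j),
          volume (R (β k) ∩ R α)
          = ∑ n ∈ selSet w v (α : ℕ), w n (α : ℕ) := by
        rw [hTfix, hT, hfil, ← key (α : ℕ) (fun n => volume (RR n ∩ RR (α : ℕ)))]
        apply Finset.sum_congr rfl
        intro k _
        show volume (R (β k) ∩ R α) = volume (RR ((β k : Fin ℓ) : ℕ) ∩ RR ((α : Fin ℓ) : ℕ))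
        rw [hRRe (β k), hRRe α]
      rw [hsum]
      have : v (α : ℕ) = volume (R α) := by
        show volume (RR ((α : Fin ℓ) : ℕ)) = _
        rw [hRRe α]
      calc 2⁻¹ * volume (R α) = 2⁻¹ * v (α : ℕ) := by rw [this]
        _ < ∑ n ∈ selSet w v (α : ℕ), w n (α : ℕ) := hbig
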